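/- Let G be a disconnected graph consisting of two connected components H and F, each containing at least one edge, and let G' be obtained from G by adding a single edge between a vertex of H and a vertex of F. Then the connected Grundy number of G' is at least max(Γ_c(H), Γ_c(F)). -/

import Mathlib

open SimpleGraph

/-- First-fit coloring along a vertex sequence: each vertex in turn receives the
smallest positive integer not used on its already-colored neighbors. Uncolored
vertices have color `0`. -/
noncomputable def firstFit {V : Type*} [DecidableEq V] (G : SimpleGraph V) (l : List V) :
    V → ℕ :=
  l.foldl (fun c v => Function.update c v
    (sInf {k | 0 < k ∧ ∀ u, G.Adj v u → c u ≠ k})) (fun _ => 0)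

/-- `l` is an ordering of all vertices. -/
def IsOrdering {V : Type*} (l : List V) : Prop := l.Nodup ∧ ∀ v : V, v ∈ l

/-- `l` is a connected ordering: every vertex after the first has a neighbor earlier. -/
def IsConnectedOrdering {V : Type*} (G : SimpleGraph V) (l : List V) : Prop :=
  IsOrdering l ∧ ∀ i (hi : i < l.length), 0 < i → ∃ u ∈ l.take i, G.Adj u (l.get ⟨i, hi⟩)

/-- Number of colors used by first-fit along `l`. -/
noncomputable def numColors {V : Type*} [Fintype V] [DecidableEq V] (G : SimpleGraph V)
    (l : List V) : ℕ :=
  Finset.univ.sup (firstFit G l)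

/-- The Grundy number: maximum number of first-fit colors over all vertex orderings. -/
noncomputable def grundy {V : Type*} [Fintype V] [DecidableEq V] (G : SimpleGraph V) : ℕ :=
  sSup {k | ∃ l : List V, IsOrdering l ∧ k = numColors G l}

/-- The connected Grundy number: maximum number of first-fit colors over connected orderings. -/
noncomputable def connGrundy {V : Type*} [Fintype V] [DecidableEq V] (G : SimpleGraph V) : ℕ :=
  sSup {k | ∃ l : List V, IsConnectedOrdering G l ∧ k = numColors G l}

/-- The graph obtained from the disjoint union of `H` and `F` by adding the single
edge joining `a : α` to `b : β`. -/
def joinGraph {α β : Type*} (H : SimpleGraph α) (F : SimpleGraph β) (a : α) (b : β) :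
    SimpleGraph (α ⊕ β) :=
  SimpleGraph.fromRel fun p q =>
    match p, q with
    | Sum.inl x, Sum.inl y => H.Adj x y
    | Sum.inr x, Sum.inr y => F.Adj x y
    | Sum.inl x, Sum.inr y => x = a ∧ y = b
    | Sum.inr _, Sum.inl _ => False

/-!
Any induced embedding `f : H ↪g G` into a connected graph `G` gives `Γ_c(H) ≤ Γ_c(G)`: the
image of a connected ordering of `H` is a connected prefix in `G`, which extends to a connected
ordering of `G` since `G` is connected. First-fit colors that prefix exactly as it colors `H`
(vertices off the image are still uncolored, i.e. have color `0`, which first-fit never avoids),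
and the later vertices do not recolor it. Both `H` and `F` embed in `G'` as induced subgraphs,
and `G'` is connected.
-/

section ConnectedGrundy

variable {V W : Type*}

def PrefixConnected (G : SimpleGraph V) (l : List V) : Prop :=
  ∀ i (hi : i < l.length), 0 < i → ∃ u ∈ l.take i, G.Adj u l[i]

theorem PrefixConnected.map {G : SimpleGraph V} {H : SimpleGraph W} (f : H →g G) {l : List W}
    (hl : PrefixConnected H l) : PrefixConnected G (l.map f) := by
  intro i hi hpos
  rw [List.length_map] at hi
  obtain ⟨u, hu, hadj⟩ := hl i hi hpos
  refine ⟨f u, ?_, ?_⟩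
  · rw [← List.map_take]
    exact List.mem_map_of_mem hu
  · rw [List.getElem_map]
    exact f.map_adj hadj

theorem PrefixConnected.concat {G : SimpleGraph V} {l : List V} (hl : PrefixConnected G l)
    {w u : V} (hw : w ∈ l) (hwu : G.Adj w u) : PrefixConnected G (l ++ [u]) := by
  intro i hi hpos
  rcases (Nat.lt_succ_iff.mp (by simpa using hi)).lt_or_eq with hlt | rfl
  · obtain ⟨v, hv, hadj⟩ := hl i hlt hpos
    refine ⟨v, ?_, ?_⟩
    · rwa [List.take_append_of_le_length hlt.le]
    · rwa [List.getElem_append_left hlt]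
  · refine ⟨w, ?_, ?_⟩
    · rwa [List.take_append_of_le_length le_rfl, List.take_length]
    · rwa [List.getElem_concat_length rfl]

theorem SimpleGraph.Connected.exists_isConnectedOrdering_append [Fintype V] {G : SimpleGraph V}
    (hG : G.Connected) {l : List V} (hne : l ≠ []) (hnd : l.Nodup) (hl : PrefixConnected G l) :
    ∃ l', IsConnectedOrdering G (l ++ l') := by
  by_cases hall : ∀ v, v ∈ l
  · exact ⟨[], by simpa using ⟨⟨hnd, hall⟩, hl⟩⟩
  obtain ⟨t, ht⟩ := not_forall.mp hall
  obtain ⟨d, -, hd, hdt⟩ :=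
    (hG.preconnected (l.head hne) t).some.exists_boundary_dart {v | v ∈ l} (List.head_mem hne) ht
  have hnd' : (l ++ [d.snd]).Nodup := List.concat_eq_append .. ▸ hnd.concat hdt
  have hlen : (l ++ [d.snd]).length ≤ Fintype.card V := hnd'.length_le_card
  obtain ⟨l', hl'⟩ := hG.exists_isConnectedOrdering_append (by simp) hnd' (hl.concat hd d.adj)
  exact ⟨d.snd :: l', by simpa using hl'⟩
termination_by Fintype.card V - l.length
decreasing_by simp only [List.length_append, List.length_singleton] at hlen ⊢; omega

theorem bddAbove_numColors_isConnectedOrdering [Fintype V] [DecidableEq V] (G : SimpleGraph V) :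
    BddAbove {k | ∃ l, IsConnectedOrdering G l ∧ k = numColors G l} := by
  refine ((Finset.univ.toList.permutations.map (numColors G)).finite_toSet.subset ?_).bddAbove
  rintro _ ⟨l, hl, rfl⟩
  refine List.mem_map_of_mem (List.mem_permutations.2 ?_)
  exact (List.perm_ext_iff_of_nodup hl.1.1 (Finset.nodup_toList _)).2 fun v => by simp [hl.1.2 v]

variable [DecidableEq V] {G : SimpleGraph V} {H : SimpleGraph W}

noncomputable def firstFitStep (G : SimpleGraph V) (c : V → ℕ) (v : V) : V → ℕ :=
  Function.update c v (sInf {k | 0 < k ∧ ∀ u, G.Adj v u → c u ≠ k})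

theorem firstFit_eq_foldl (G : SimpleGraph V) (l : List V) :
    firstFit G l = l.foldl (firstFitStep G) (fun _ => 0) := rfl

theorem foldl_firstFitStep_apply_of_notMem (c : V → ℕ) {l : List V} {v : V} (hv : v ∉ l) :
    l.foldl (firstFitStep G) c v = c v := by
  induction l generalizing c with
  | nil => rfl
  | cons w l ih =>
    rw [List.mem_cons, not_or] at hv
    rw [List.foldl_cons, ih _ hv.2, firstFitStep, Function.update_of_ne hv.1]

theorem firstFit_append_apply_of_notMem (l₁ : List V) {l₂ : List V} {v : V} (hv : v ∉ l₂) :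
    firstFit G (l₁ ++ l₂) v = firstFit G l₁ v := by
  rw [firstFit_eq_foldl, List.foldl_append, foldl_firstFitStep_apply_of_notMem _ hv]
  rfl

theorem firstFitStep_eq_zero_of_notMem_range (f : H ↪g G) {cG : V → ℕ}
    (hzero : ∀ v ∉ Set.range f, cG v = 0) (x : W) :
    ∀ v ∉ Set.range f, firstFitStep G cG (f x) v = 0 := fun v hv => by
  rw [firstFitStep, Function.update_of_ne (by rintro rfl; exact hv ⟨x, rfl⟩)]
  exact hzero v hv

variable [DecidableEq W]

theorem firstFitStep_comp_embedding (f : H ↪g G) {cH : W → ℕ} {cG : V → ℕ}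
    (hcomp : cG ∘ f = cH) (hzero : ∀ v ∉ Set.range f, cG v = 0) (x : W) :
    firstFitStep G cG (f x) ∘ f = firstFitStep H cH x := by
  have hfree : {k | 0 < k ∧ ∀ u, G.Adj (f x) u → cG u ≠ k} =
      {k | 0 < k ∧ ∀ y, H.Adj x y → cH y ≠ k} := by
    ext k
    refine and_congr_right fun hk => ⟨fun h y hy => ?_, fun h u hu => ?_⟩
    · rw [← hcomp]
      exact h (f y) (f.map_adj_iff.2 hy)
    · by_cases hu' : u ∈ Set.range f
      · obtain ⟨y, rfl⟩ := hu'
        rw [← hcomp] at h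
        exact h y (f.map_adj_iff.1 hu)
      · rw [hzero u hu']
        exact hk.ne
  rw [firstFitStep, Function.update_comp_eq_of_injective _ f.injective, hcomp, hfree]
  rfl

theorem foldl_firstFitStep_map_comp (f : H ↪g G) (l : List W) {cH : W → ℕ} {cG : V → ℕ}
    (hcomp : cG ∘ f = cH) (hzero : ∀ v ∉ Set.range f, cG v = 0) :
    (l.map f).foldl (firstFitStep G) cG ∘ f = l.foldl (firstFitStep H) cH := by
  induction l generalizing cH cG with
  | nil => exact hcomp
  | cons x l ih =>
    exact ih (firstFitStep_comp_embedding f hcomp hzero x)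
      (firstFitStep_eq_zero_of_notMem_range f hzero x)

theorem firstFit_map_apply (f : H ↪g G) (l : List W) (x : W) :
    firstFit G (l.map f) (f x) = firstFit H l x :=
  congrFun (foldl_firstFitStep_map_comp f l rfl fun _ _ => rfl) x

theorem numColors_le_numColors_map_append [Fintype V] [Fintype W] (f : H ↪g G) {l : List W}
    (hl : IsOrdering l) {l' : List V} (hnd : (l.map f ++ l').Nodup) :
    numColors H l ≤ numColors G (l.map f ++ l') :=
  Finset.sup_le fun x _ => by
    have hx : f x ∉ l' := List.disjoint_of_nodup_append hnd (List.mem_map_of_mem (hl.2 x))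
    rw [← firstFit_map_apply f, ← firstFit_append_apply_of_notMem _ hx]
    exact Finset.le_sup (Finset.mem_univ _)

theorem connGrundy_le_of_embedding [Fintype V] [Fintype W] (hG : G.Connected) (f : H ↪g G) :
    connGrundy H ≤ connGrundy G := by
  refine csSup_le' ?_
  rintro _ ⟨l, hl, rfl⟩
  rcases eq_or_ne l [] with rfl | hne
  · simp [numColors, firstFit]
  obtain ⟨l', hl'⟩ := hG.exists_isConnectedOrdering_append (l := l.map f) (by simpa)
    (hl.1.1.map f.injective) (PrefixConnected.map f.toHom hl.2)
  calc numColors H l ≤ numColors G (l.map f ++ l') :=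
        numColors_le_numColors_map_append f hl.1 hl'.1.1
    _ ≤ connGrundy G := le_csSup (bddAbove_numColors_isConnectedOrdering G) ⟨_, hl', rfl⟩

end ConnectedGrundy

section JoinGraph

variable {α β : Type*} {H : SimpleGraph α} {F : SimpleGraph β} {a : α} {b : β}

theorem joinGraph_adj_inl_inl {x y : α} :
    (joinGraph H F a b).Adj (Sum.inl x) (Sum.inl y) ↔ H.Adj x y := by
  simpa [joinGraph, H.adj_comm y x] using H.ne_of_adj

theorem joinGraph_adj_inr_inr {x y : β} :
    (joinGraph H F a b).Adj (Sum.inr x) (Sum.inr y) ↔ F.Adj x y := by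
  simpa [joinGraph, F.adj_comm y x] using F.ne_of_adj

theorem joinGraph_adj_inl_inr : (joinGraph H F a b).Adj (Sum.inl a) (Sum.inr b) := by
  simp [joinGraph]

variable (H F a b)

def joinGraphInl : H ↪g joinGraph H F a b :=
  ⟨Function.Embedding.inl, joinGraph_adj_inl_inl⟩

def joinGraphInr : F ↪g joinGraph H F a b :=
  ⟨Function.Embedding.inr, joinGraph_adj_inr_inr⟩

variable {H F}

theorem joinGraph_connected (hH : H.Connected) (hF : F.Connected) :
    (joinGraph H F a b).Connected := by
  suffices h : ∀ v, (joinGraph H F a b).Reachable (Sum.inl a) v from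
    (connected_iff _).2 ⟨fun u v => (h u).symm.trans (h v), ⟨Sum.inl a⟩⟩
  rintro (x | y)
  · exact (hH.preconnected a x).map (joinGraphInl H F a b).toHom
  · exact joinGraph_adj_inl_inr.reachable.trans
      ((hF.preconnected b y).map (joinGraphInr H F a b).toHom)

end JoinGraph

theorem stmt18_general {α β : Type*} [Fintype α] [Fintype β] [DecidableEq α] [DecidableEq β]
    (H : SimpleGraph α) (F : SimpleGraph β) (hH : H.Connected) (hF : F.Connected)
    (a : α) (b : β) :
    max (connGrundy H) (connGrundy F) ≤ connGrundy (joinGraph H F a b) :=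
  max_le (connGrundy_le_of_embedding (joinGraph_connected a b hH hF) (joinGraphInl H F a b))
    (connGrundy_le_of_embedding (joinGraph_connected a b hH hF) (joinGraphInr H F a b))

theorem stmt18 {α β : Type*} [Fintype α] [Fintype β] [DecidableEq α] [DecidableEq β]
    (H : SimpleGraph α) (F : SimpleGraph β) (hH : H.Connected) (hF : F.Connected)
    (heH : ∃ x y : α, H.Adj x y) (heF : ∃ x y : β, F.Adj x y) (a : α) (b : β) :
    max (connGrundy H) (connGrundy F) ≤ connGrundy (joinGraph H F a b) :=
  stmt18_general H F hH hF a b
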